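/- Restriction to the λ-part maps any Littlewood-Richardson skew tableau S of shape λ*α and content ν (with λ a two-row partition, αᵢ = Σ_{j>i} μⱼ, νᵢ = αᵢ + μᵢ, ν_ℓ = μ_ℓ) to a semistandard Young tableau of shape λ and content μ = ν − (α, 0). -/

import Mathlib

/-!
In an LR tableau of shape `λ*α` the rows of `α` are stacked in the same columns, each no longer
than the one above. Column strictness forces the entries of row `i` of `α` to be `≥ i`, and the
lattice condition, applied to the rightmost (first read) entry of that row, forces them to be
`≤ i`. So the `α`-part is filled row by row with its own index and uses up content `α`; the two
left-justified rows of `λ` then form a semistandard tableau of shape `λ` with the remaining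
content `ν - (α, 0) = μ`.
-/

open Finset

/-- The two-row Young diagram with row lengths `l1` (top) and `l2` (bottom).
In intended uses `l2 ≤ l1`. -/
def twoRow (l1 l2 : ℕ) : YoungDiagram :=
  YoungDiagram.ofRowLens [max l1 l2, l2] (by
    simp [List.sortedGE_iff_pairwise, le_max_right])

/-- The number of cells of `T` with entry `v` (entries are 0-indexed). -/
def content {sh : YoungDiagram} (T : SemistandardYoungTableau sh) (v : ℕ) : ℕ :=
  (sh.cells.filter fun c => T c.1 c.2 = v).card

/-- Kostka number: the number of semistandard Young tableaux of shape `sh`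
with content `c` (entries 0-indexed: `c v` copies of entry `v`). -/
noncomputable def kostka (sh : YoungDiagram) (c : ℕ → ℕ) : ℕ :=
  Nat.card {T : SemistandardYoungTableau sh // ∀ v, content T v = c v}

/-- A skew semistandard tableau on the skew shape whose `i`-th row occupies
columns `[lo i, lo i + len i)`: rows weakly increase, columns strictly increase,
entries vanish off the shape. -/
structure SkewTab (lo len : ℕ → ℕ) where
  entry : ℕ → ℕ → ℕ
  rowWeak : ∀ i j1 j2, lo i ≤ j1 → j1 ≤ j2 → j2 < lo i + len i → entry i j1 ≤ entry i j2
  colStrict : ∀ i j, lo i ≤ j → j < lo i + len i → lo (i + 1) ≤ j →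
    j < lo (i + 1) + len (i + 1) → entry i j < entry (i + 1) j
  zeros : ∀ i j, ¬(lo i ≤ j ∧ j < lo i + len i) → entry i j = 0

/-- The reading word: each row read right to left, rows top to bottom. -/
def readWord (lo len : ℕ → ℕ) (rows : ℕ) (T : SkewTab lo len) : List ℕ :=
  (List.range rows).flatMap fun i =>
    (List.range (len i)).reverse.map fun t => T.entry i (lo i + t)

/-- A word is a lattice word: every prefix has at least as many `v`'s as `(v+1)`'s. -/
def IsLattice (w : List ℕ) : Prop := ∀ n v, (w.take n).count (v + 1) ≤ (w.take n).count v

/-- Number of copies of `v` in row `i` of the skew tableau `T`. -/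
def rowContent (lo len : ℕ → ℕ) (T : SkewTab lo len) (i v : ℕ) : ℕ :=
  ((Finset.Ico (lo i) (lo i + len i)).filter fun j => T.entry i j = v).card

/-- Total number of copies of `v` in the skew tableau `T` (with `rows` rows). -/
def skewContent (lo len : ℕ → ℕ) (rows : ℕ) (T : SkewTab lo len) (v : ℕ) : ℕ :=
  ∑ i ∈ Finset.range rows, rowContent lo len T i v

/-- Left endpoints of the rows of the skew shape `λ*α` where `λ = (l1, l2)` and
`α` has `m` rows: the `m` rows of `α` start at column `l1`, the two rows of `λ` at column 0. -/
def starLo (l1 m : ℕ) (i : ℕ) : ℕ := if i < m then l1 else 0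

/-- Row lengths of the skew shape `λ*α`, `λ = (l1, l2)`, `α` with `m` rows. -/
def starLen (l1 l2 : ℕ) (a : ℕ → ℕ) (m : ℕ) (i : ℕ) : ℕ :=
  if i < m then a i else if i = m then l1 else if i = m + 1 then l2 else 0

theorem IsLattice.of_prefix {u w : List ℕ} (huw : u <+: w) (hw : IsLattice w) :
    IsLattice u := by
  intro n v
  rw [List.prefix_iff_eq_take.mp huw, List.take_take]
  exact hw _ v

/-- Otherwise the prefix ending in `c` contains a `c` but no `c - 1`. -/
theorem IsLattice.le_of_append_cons {u w : List ℕ} {c i : ℕ} (h : IsLattice (u ++ c :: w))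
    (hu : ∀ x ∈ u, x < i) : c ≤ i := by
  by_contra! hci
  have hlat := h (u.length + 1) (c - 1)
  rw [Nat.sub_add_cancel (by omega), List.take_append, List.take_of_length_le (by omega),
    Nat.add_sub_cancel_left, List.take_one, List.head?_cons, Option.toList_some] at hlat
  have hc : 0 < (u ++ [c]).count c := List.count_pos_iff.mpr (by simp)
  have hc' : (u ++ [c]).count (c - 1) = 0 :=
    List.count_eq_zero.mpr fun hx => by
      rcases List.mem_append.mp hx with hx | hx
      · have := hu _ hx; omega
      · simp at hx; omega
  omega

namespace SkewTab

variable {lo len : ℕ → ℕ} (S : SkewTab lo len)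

def rowWord (i : ℕ) : List ℕ :=
  (List.range (len i)).reverse.map fun t => S.entry i (lo i + t)

theorem rowWord_eq_cons {i : ℕ} (hi : 0 < len i) :
    ∃ w, S.rowWord i = S.entry i (lo i + (len i - 1)) :: w := by
  obtain ⟨q, hq⟩ := Nat.exists_eq_add_of_lt hi
  refine ⟨(List.range q).reverse.map fun t => S.entry i (lo i + t), ?_⟩
  simp [rowWord, hq, List.range_succ]

theorem readWord_succ (r : ℕ) :
    readWord lo len (r + 1) S = readWord lo len r S ++ S.rowWord r := by
  simp [readWord, rowWord, List.range_succ]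

theorem readWord_prefix {r R : ℕ} (h : r ≤ R) :
    readWord lo len r S <+: readWord lo len R S := by
  induction R, h using Nat.le_induction with
  | base => exact List.prefix_refl _
  | succ R _ ih => exact ih.trans (by rw [readWord_succ]; exact List.prefix_append _ _)

theorem exists_of_mem_readWord {x r : ℕ} (hx : x ∈ readWord lo len r S) :
    ∃ k < r, ∃ t < len k, x = S.entry k (lo k + t) := by
  simp only [readWord, List.mem_flatMap, List.mem_map, List.mem_reverse, List.mem_range] at hx
  obtain ⟨k, hk, t, ht, rfl⟩ := hx
  exact ⟨k, hk, t, ht, rfl⟩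

theorem entry_eq_row_of_isLattice {m : ℕ}
    (hlo : ∀ k, k + 1 < m → lo k ≤ lo (k + 1))
    (hend : ∀ k, k + 1 < m → lo (k + 1) + len (k + 1) ≤ lo k + len k)
    (hLR : IsLattice (readWord lo len m S)) :
    ∀ i < m, ∀ j, lo i ≤ j → j < lo i + len i → S.entry i j = i := by
  intro i
  induction i using Nat.strong_induction_on with
  | _ i ih =>
    intro him j hj hj'
    have hge : i ≤ S.entry i j := by
      rcases i with _ | k
      · exact Nat.zero_le _
      · have hk := ih k (by omega) (by omega) j (by have := hlo k him; omega)
          (by have := hend k him; omega)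
        have := S.colStrict k j (by have := hlo k him; omega) (by have := hend k him; omega) hj hj'
        omega
    have hle : S.entry i (lo i + (len i - 1)) ≤ i := by
      obtain ⟨w, hw⟩ := S.rowWord_eq_cons (i := i) (by omega)
      have hLRi : IsLattice (readWord lo len i S ++ S.entry i (lo i + (len i - 1)) :: w) := by
        rw [← hw, ← readWord_succ]
        exact hLR.of_prefix (S.readWord_prefix him)
      refine hLRi.le_of_append_cons fun x hx => ?_
      obtain ⟨k, hk, t, ht, rfl⟩ := S.exists_of_mem_readWord hx
      rw [ih k hk (by omega) _ (by omega) (by omega)]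
      exact hk
    have := S.rowWeak i j (lo i + (len i - 1)) hj (by omega) (by omega)
    omega

theorem rowContent_of_entry_eq {i c : ℕ}
    (h : ∀ j, lo i ≤ j → j < lo i + len i → S.entry i j = c) (v : ℕ) :
    rowContent lo len S i v = if c = v then len i else 0 := by
  unfold rowContent
  split_ifs with hcv
  · rw [filter_true_of_mem fun j hj => by rw [mem_Ico] at hj; rw [h j hj.1 hj.2, hcv]]
    simp
  · rw [filter_false_of_mem fun j hj => by rw [mem_Ico] at hj; rw [h j hj.1 hj.2]; exact hcv]
    simp

theorem sum_rowContent_of_entry_eq_row {m : ℕ}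
    (h : ∀ i < m, ∀ j, lo i ≤ j → j < lo i + len i → S.entry i j = i) (v : ℕ) :
    ∑ i ∈ range m, rowContent lo len S i v = if v < m then len v else 0 := by
  rw [sum_congr rfl fun i hi => S.rowContent_of_entry_eq (h i (mem_range.mp hi)) v,
    sum_ite_eq']
  simp

end SkewTab

theorem mem_twoRow {l1 l2 i j : ℕ} (hl : l2 ≤ l1) :
    (i, j) ∈ twoRow l1 l2 ↔ (i = 0 ∧ j < l1) ∨ (i = 1 ∧ j < l2) := by
  rw [twoRow, YoungDiagram.mem_ofRowLens, max_eq_left hl]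
  constructor
  · rintro ⟨hi, hj⟩
    simp only [List.length_cons, List.length_nil] at hi
    interval_cases i <;> simp_all
  · rintro (⟨rfl, hj⟩ | ⟨rfl, hj⟩) <;> simpa

theorem cells_twoRow {l1 l2 : ℕ} (hl : l2 ≤ l1) :
    (twoRow l1 l2).cells =
      (range l1).image (Prod.mk 0) ∪ (range l2).image (Prod.mk 1) := by
  ext ⟨i, j⟩
  rw [YoungDiagram.mem_cells, mem_twoRow hl]
  aesop

namespace SkewTab

variable {lo len : ℕ → ℕ} (S : SkewTab lo len) (r : ℕ) {l1 l2 : ℕ} (hl : l2 ≤ l1)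
  (hlo : lo r = 0) (hlo' : lo (r + 1) = 0) (hlen : len r = l1) (hlen' : len (r + 1) = l2)

def restrictTwoRow : SemistandardYoungTableau (twoRow l1 l2) where
  entry i j := if (i, j) ∈ twoRow l1 l2 then S.entry (r + i) j else 0
  row_weak' {i j1 j2} hj hmem := by
    rw [if_pos hmem, if_pos (YoungDiagram.up_left_mem _ le_rfl hj.le hmem)]
    rcases (mem_twoRow hl).mp hmem with ⟨rfl, hj2⟩ | ⟨rfl, hj2⟩
    · exact S.rowWeak r j1 j2 (by omega) hj.le (by omega)
    · exact S.rowWeak (r + 1) j1 j2 (by omega) hj.le (by omega)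
  col_strict' {i1 i2 j} hi hmem := by
    rw [if_pos hmem, if_pos (YoungDiagram.up_left_mem _ hi.le le_rfl hmem)]
    rcases (mem_twoRow hl).mp hmem with ⟨rfl, _⟩ | ⟨rfl, hj⟩
    · omega
    · obtain rfl : i1 = 0 := by omega
      exact S.colStrict r j (by omega) (by omega) (by omega) (by omega)
  zeros' hmem := if_neg hmem

theorem restrictTwoRow_apply {i j : ℕ} (hij : (i, j) ∈ twoRow l1 l2) :
    S.restrictTwoRow r hl hlo hlo' hlen hlen' i j = S.entry (r + i) j :=
  if_pos hij

theorem content_restrictTwoRow (v : ℕ) :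
    content (S.restrictTwoRow r hl hlo hlo' hlen hlen') v =
      rowContent lo len S r v + rowContent lo len S (r + 1) v := by
  have hdisj : Disjoint ((range l1).image (Prod.mk 0))
      ((range l2).image (Prod.mk 1)) := by
    simp [disjoint_left]
  rw [content, cells_twoRow hl, filter_union, card_union_of_disjoint
    (disjoint_filter_filter hdisj), filter_image, filter_image,
    card_image_of_injective _ (Prod.mk_right_injective 0),
    card_image_of_injective _ (Prod.mk_right_injective 1),
    rowContent, rowContent, hlo, hlo', hlen, hlen', zero_add, zero_add, ← range_eq_Ico,
    ← range_eq_Ico]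
  congr 2 <;> refine filter_congr fun j hj => ?_ <;> rw [mem_range] at hj
  · rw [restrictTwoRow_apply S r hl hlo hlo' hlen hlen' ((mem_twoRow hl).mpr (.inl ⟨rfl, hj⟩)),
      add_zero]
  · rw [restrictTwoRow_apply S r hl hlo hlo' hlen hlen' ((mem_twoRow hl).mpr (.inr ⟨rfl, hj⟩))]

end SkewTab

section StarShape

variable {l1 l2 m : ℕ} {a : ℕ → ℕ}

theorem starLo_of_lt {i : ℕ} (h : i < m) : starLo l1 m i = l1 := if_pos h

theorem starLo_of_le {i : ℕ} (h : m ≤ i) : starLo l1 m i = 0 := if_neg (by omega)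

theorem starLen_of_lt {i : ℕ} (h : i < m) : starLen l1 l2 a m i = a i := if_pos h

theorem starLen_self : starLen l1 l2 a m m = l1 := by simp [starLen]

theorem starLen_succ_self : starLen l1 l2 a m (m + 1) = l2 := by simp [starLen]

theorem SkewTab.entry_eq_row_of_star (S : SkewTab (starLo l1 m) (starLen l1 l2 a m))
    (ha : Antitone a) (hLR : IsLattice (readWord (starLo l1 m) (starLen l1 l2 a m) m S)) :
    ∀ i < m, ∀ j, starLo l1 m i ≤ j → j < starLo l1 m i + starLen l1 l2 a m i →
      S.entry i j = i :=
  S.entry_eq_row_of_isLattice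
    (fun k hk => by rw [starLo_of_lt (i := k) (by omega), starLo_of_lt hk])
    (fun k hk => by
      rw [starLo_of_lt (i := k) (by omega), starLo_of_lt hk, starLen_of_lt (i := k) (by omega),
        starLen_of_lt hk]
      exact Nat.add_le_add_left (ha k.le_succ) _)
    hLR

theorem SkewTab.rowContent_star_add {L : ℕ} {mu : ℕ → ℕ} (hmu : ∀ i, L ≤ i → mu i = 0)
    (hmL : m + 1 = L) (ha : ∀ i, a i = ∑ w ∈ Ico (i + 1) L, mu w)
    (S : SkewTab (starLo l1 m) (starLen l1 l2 a m))
    (hLR : IsLattice (readWord (starLo l1 m) (starLen l1 l2 a m) (L + 1) S))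
    (hcont : ∀ v, skewContent (starLo l1 m) (starLen l1 l2 a m) (L + 1) S v =
      ∑ w ∈ Ico v L, mu w) (v : ℕ) :
    rowContent _ _ S m v + rowContent _ _ S (m + 1) v = mu v := by
  subst hmL
  have hanti : Antitone a := fun k i hki => by
    rw [ha, ha]
    exact sum_le_sum_of_subset (Ico_subset_Ico (by omega) le_rfl)
  have hrows := S.sum_rowContent_of_entry_eq_row
    (S.entry_eq_row_of_star hanti (hLR.of_prefix (S.readWord_prefix (by omega)))) v
  have hαv : (if v < m then starLen l1 l2 a m v else 0) = a v := by
    split_ifs with hv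
    · exact starLen_of_lt hv
    · rw [ha, Ico_eq_empty (by omega), sum_empty]
  have hνv : ∑ w ∈ Ico v (m + 1), mu w = mu v + a v := by
    by_cases hv : v < m + 1
    · rw [ha]
      exact sum_eq_sum_Ico_succ_bot hv mu
    · rw [ha, Ico_eq_empty (by omega), Ico_eq_empty (by omega), hmu v (by omega)]
      rfl
  have hv := hcont v
  rw [skewContent, sum_range_succ, sum_range_succ, hrows, hαv, hνv] at hv
  omega

end StarShape

theorem stmt18_general (l1 l2 L : ℕ) (hl : l2 ≤ l1) (hL : 1 ≤ L) (mu : ℕ → ℕ)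
    (hmu : ∀ i, L ≤ i → mu i = 0)
    (S : SkewTab (starLo l1 (L - 1)) (starLen l1 l2 (fun i => ∑ w ∈ Finset.Ico (i + 1) L, mu w) (L - 1)))
    (hLR : IsLattice (readWord (starLo l1 (L - 1)) (starLen l1 l2 (fun i => ∑ w ∈ Finset.Ico (i + 1) L, mu w) (L - 1)) (L + 1) S))
    (hcont : ∀ v, skewContent (starLo l1 (L - 1)) (starLen l1 l2 (fun i => ∑ w ∈ Finset.Ico (i + 1) L, mu w) (L - 1)) (L + 1) S v =
      ∑ w ∈ Finset.Ico v L, mu w) :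
    ∃ T : SemistandardYoungTableau (twoRow l1 l2),
      (∀ i j, (i, j) ∈ twoRow l1 l2 → T i j = S.entry ((L - 1) + i) j) ∧
      ∀ v, content T v = mu v := by
  let T := S.restrictTwoRow (L - 1) hl (starLo_of_le le_rfl) (starLo_of_le (Nat.le_succ _))
    starLen_self starLen_succ_self
  refine ⟨T, fun i j hij => S.restrictTwoRow_apply _ _ _ _ _ _ hij, fun v => ?_⟩
  rw [S.content_restrictTwoRow,
    S.rowContent_star_add hmu (Nat.sub_add_cancel hL) (fun _ => rfl) hLR hcont]

/-- Restriction to the `λ`-part maps any LR skew tableau of shape `λ*α` and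
content `ν` (with `α i = Σ_{j>i} μ j`, `ν i = Σ_{j≥i} μ j`) to a SSYT of shape
`λ = (l1, l2)` and content `μ = ν - (α, 0)`. -/
theorem stmt18 (l1 l2 L : ℕ) (hl : l2 ≤ l1) (hL : 1 ≤ L) (mu : ℕ → ℕ)
    (hmu : ∀ i, L ≤ i → mu i = 0) (hsum : l1 + l2 = ∑ j ∈ Finset.range L, mu j)
    (S : SkewTab (starLo l1 (L - 1)) (starLen l1 l2 (fun i => ∑ w ∈ Finset.Ico (i + 1) L, mu w) (L - 1)))
    (hLR : IsLattice (readWord (starLo l1 (L - 1)) (starLen l1 l2 (fun i => ∑ w ∈ Finset.Ico (i + 1) L, mu w) (L - 1)) (L + 1) S))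
    (hcont : ∀ v, skewContent (starLo l1 (L - 1)) (starLen l1 l2 (fun i => ∑ w ∈ Finset.Ico (i + 1) L, mu w) (L - 1)) (L + 1) S v =
      ∑ w ∈ Finset.Ico v L, mu w) :
    ∃ T : SemistandardYoungTableau (twoRow l1 l2),
      (∀ i j, (i, j) ∈ twoRow l1 l2 → T i j = S.entry ((L - 1) + i) j) ∧
      ∀ v, content T v = mu v :=
  stmt18_general l1 l2 L hl hL mu hmu S hLR hcont
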